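/- For all positive integers a, b, the maps Φ_{a,b} : V(a) ⊗ V(b) → V(a+b) and Φ^{a,b} : V(a+b) → V(a) ⊗ V(b) are homomorphisms of U_q(gl(1|1))-modules, commute with the bar involutions, and satisfy Φ_{a,b} ∘ Φ^{a,b} = [a+b choose a]·id_{V(a+b)}. -/

import Mathlib

open scoped Classical

set_option maxHeartbeats 1000000
set_option synthInstance.maxHeartbeats 200000

noncomputable section

abbrev K : Type := RatFunc ℂ

noncomputable def q : K := RatFunc.X

/-- The quantum integer `[k] = (q^k - q^{-k})/(q - q^{-1})`. -/
noncomputable def qnum (k : ℕ) : K := (q ^ k - q⁻¹ ^ k) / (q - q⁻¹)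

/-- The quantum factorial `[k]! = [k][k-1]⋯[1]`. -/
noncomputable def qfact : ℕ → K
  | 0 => 1
  | k + 1 => qnum (k + 1) * qfact k

/-- The underlying vector space of `V(a_1) ⊗ ⋯ ⊗ V(a_l)`, with standard basis indexed by
sequences `η ∈ {0,1}^l`. -/
abbrev V (n : ℕ) : Type := (Fin n → Fin 2) → K

/-- The standard basis vector `v^a_η`. -/
noncomputable def eb {n : ℕ} (η : Fin n → Fin 2) : V n := fun γ => if γ = η then 1 else 0

/-- The number of `1`s in `γ` strictly before position `i` (the Koszul sign exponent). -/
def onesBefore {n : ℕ} (γ : Fin n → Fin 2) (i : Fin n) : ℕ :=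
  (Finset.univ.filter (fun k => k < i ∧ γ k = 1)).card

/-- The action of `E` on `V(a_1) ⊗ ⋯ ⊗ V(a_l)` (via the iterated comultiplication
`Δ(E) = E ⊗ K⁻¹ + 1 ⊗ E`, with the Koszul sign rule). -/
noncomputable def Eop (a : ℕ → ℕ) (n : ℕ) : Module.End K (V n) where
  toFun f := fun γ => ∑ i : Fin n,
    if γ i = 0 then
      ((-1 : K) ^ onesBefore γ i) * qnum (a i)
        * q ^ (-((∑ j ∈ Finset.univ.filter (fun j => i < j), a j : ℕ) : ℤ))
        * f (Function.update γ i 1)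
    else 0
  map_add' f g := by
    funext γ
    simp only [Pi.add_apply, ← Finset.sum_add_distrib]
    refine Finset.sum_congr rfl fun i _ => ?_
    split_ifs <;> ring
  map_smul' c f := by
    funext γ
    simp only [Pi.smul_apply, smul_eq_mul, RingHom.id_apply, Finset.mul_sum]
    refine Finset.sum_congr rfl fun i _ => ?_
    split_ifs <;> ring

/-- The action of `F` on `V(a_1) ⊗ ⋯ ⊗ V(a_l)` (via the iterated comultiplication
`Δ(F) = F ⊗ 1 + K ⊗ F`, with the Koszul sign rule). -/
noncomputable def Fop (a : ℕ → ℕ) (n : ℕ) : Module.End K (V n) where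
  toFun f := fun γ => ∑ i : Fin n,
    if γ i = 1 then
      ((-1 : K) ^ onesBefore γ i)
        * q ^ (∑ j ∈ Finset.univ.filter (fun j => j < i), a j)
        * f (Function.update γ i 0)
    else 0
  map_add' f g := by
    funext γ
    simp only [Pi.add_apply, ← Finset.sum_add_distrib]
    refine Finset.sum_congr rfl fun i _ => ?_
    split_ifs <;> ring
  map_smul' c f := by
    funext γ
    simp only [Pi.smul_apply, smul_eq_mul, RingHom.id_apply, Finset.mul_sum]
    refine Finset.sum_congr rfl fun i _ => ?_
    split_ifs <;> ring

/-- The number of entries of `η` equal to `1` (the super degree of `v_η`). -/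
def ones {m : ℕ} (η : Fin m → Fin 2) : ℕ := (Finset.univ.filter (fun i => η i = 1)).card

/-- The number of entries of `η` equal to `0`. -/
def zeros {m : ℕ} (η : Fin m → Fin 2) : ℕ := (Finset.univ.filter (fun i => η i = 0)).card

/-- The parity twist `x ↦ (-1)^{|x|}·x` (on homogeneous components). -/
noncomputable def twist {m : ℕ} (x : V m) : V m := fun η => (-1 : K) ^ ones η * x η

/-- The bar involution of `V(a_1) ⊗ ⋯ ⊗ V(a_m)`, defined inductively from
`bar v^a_i = v^a_i` on each factor by `bar (w ⊗ w') = Θ'(bar w ⊗ bar w')` with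
`Θ' = 1 + (q⁻¹ - q) E ⊗ F` (with the Koszul sign rule) and `bar q = q⁻¹`. -/
noncomputable def barV (a : ℕ → ℕ) : (m : ℕ) → V m → V m
  | 0, f => f
  | m + 1, f => fun γ =>
    if γ (Fin.last m) = 0 then
      barV a m (fun δ => f (Fin.snoc δ 0)) (fun i => γ i.castSucc)
    else
      barV a m (fun δ => f (Fin.snoc δ 1)) (fun i => γ i.castSucc)
        + (q⁻¹ - q) *
          Eop a m (twist (barV a m (fun δ => f (Fin.snoc δ 0)))) (fun i => γ i.castSucc)

def s (n : ℕ) (i : Fin (n - 1)) : Equiv.Perm (Fin n) :=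
  Equiv.swap ⟨(i : ℕ), by have := i.isLt; omega⟩ ⟨(i : ℕ) + 1, by have := i.isLt; omega⟩

def wordProd (n : ℕ) (l : List (Fin (n - 1))) : Equiv.Perm (Fin n) :=
  (l.map (s n)).prod

def len (n : ℕ) (w : Equiv.Perm (Fin n)) : ℕ :=
  sInf {k | ∃ l : List (Fin (n - 1)), l.length = k ∧ wordProd n l = w}

def bruhatLE (n : ℕ) (u w : Equiv.Perm (Fin n)) : Prop :=
  ∃ l : List (Fin (n - 1)), l.length = len n w ∧ wordProd n l = w ∧
    ∃ t : List (Fin (n - 1)), t.Sublist l ∧ wordProd n t = u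

def bruhatLT (n : ℕ) (u w : Equiv.Perm (Fin n)) : Prop :=
  bruhatLE n u w ∧ u ≠ w

/-- The parabolic subgroup of `S_n` generated by the simple transpositions indexed by `P`. -/
def parab (n : ℕ) (P : Finset (Fin (n - 1))) : Subgroup (Equiv.Perm (Fin n)) :=
  Subgroup.closure {σ | ∃ i ∈ P, σ = s n i}

/-- `w` is a shortest coset representative for `(S_k × S_{l-k}) \ S_l` (the parabolic
subgroup generated by all simple reflections except `s_k`). -/
def shortRep (l k : ℕ) (w : Equiv.Perm (Fin l)) : Prop :=
  ∀ x ∈ parab l (Finset.univ.filter (fun i : Fin (l - 1) => (i : ℕ) + 1 ≠ k)),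
    len l w ≤ len l (x * w)

/-- The minimal `{0,1}`-sequence `η_min = (0,…,0,1,…,1)` with `k` zeros. -/
def etaMin (l k : ℕ) : Fin l → Fin 2 := fun i => if (i : ℕ) < k then 0 else 1

/-- The partial order on the standard basis vectors of a weight space: within the weight
with `k` zeros, `η < γ` iff `η = η_min·u`, `γ = η_min·w` for shortest coset
representatives `u ≺ w` in the Bruhat order. -/
def seqLT (l k : ℕ) (η γ : Fin l → Fin 2) : Prop :=
  ∃ u w : Equiv.Perm (Fin l), shortRep l k u ∧ shortRep l k w ∧ bruhatLT l u w ∧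
    η = (fun i => etaMin l k (u i)) ∧ γ = (fun i => etaMin l k (w i))

/-- The bar involution of `V(a)`: the semilinear extension (with respect to the field
homomorphism `barK`, which implements `q ↦ q⁻¹`) of the map `barV` computing the bar
involution on the standard basis vectors. -/
noncomputable def barSemi (barK : K →+* K) (a : ℕ → ℕ) (l : ℕ) (f : V l) : V l :=
  barV a l (fun η => barK (f η))

/-- `v` is the canonical basis element `v^{◊a}_η` of `V(a)`: it is bar-invariant and
`v - v^a_η` is a `q·ℤ[q]`-linear combination of standard basis vectors strictly smaller
than `v^a_η`. -/
def IsCanon (barK : K →+* K) (a : ℕ → ℕ) (l : ℕ) (η : Fin l → Fin 2) (v : V l) : Prop :=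
  barSemi barK a l v = v ∧
  ∃ R : (Fin l → Fin 2) → Polynomial ℤ,
    (∀ γ, ¬ seqLT l (zeros η) γ η → R γ = 0) ∧
    v = eb η + ∑ γ : Fin l → Fin 2, (q * Polynomial.aeval q (R γ)) • eb γ
/-- The action of `q^h` for `h = c·h₁ + d·h₂` on `V(a_1) ⊗ ⋯ ⊗ V(a_l)`:
the basis vector `v^{a_i}_0` has weight `a_i ε₁` and `v^{a_i}_1` has weight
`(a_i - 1) ε₁ + ε₂`. -/
noncomputable def Kop (a : ℕ → ℕ) (n : ℕ) (c d : ℤ) : Module.End K (V n) where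
  toFun f := fun γ =>
    q ^ (∑ i : Fin n, (if γ i = 0 then c * (a i : ℤ) else c * ((a i : ℤ) - 1) + d)) * f γ
  map_add' f g := by
    funext γ
    simp only [Pi.add_apply]
    ring
  map_smul' c' f := by
    funext γ
    simp only [Pi.smul_apply, smul_eq_mul, RingHom.id_apply]
    ring

/-- The quantum binomial coefficient `[m choose j] = [m]!/([j]![m-j]!)`. -/
noncomputable def qbin (m j : ℕ) : K := qfact m / (qfact j * qfact (m - j))

/-- The sequence `(a, b)`. -/
def pair (a b : ℕ) : ℕ → ℕ := fun j => if j = 0 then a else b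

/-- The constant sequence `(c)`. -/
def single (c : ℕ) : ℕ → ℕ := fun _ => c

/-- The projection `Φ_{a,b} : V(a) ⊗ V(b) → V(a+b)`:
`v^a_1 ⊗ v^b_1 ↦ 0`, `v^a_1 ⊗ v^b_0 ↦ q^{-b}·[a+b-1 choose b]·v^{a+b}_1`,
`v^a_0 ⊗ v^b_1 ↦ [a+b-1 choose a]·v^{a+b}_1`, `v^a_0 ⊗ v^b_0 ↦ [a+b choose a]·v^{a+b}_0`. -/
noncomputable def PhiDown (a b : ℕ) : V 2 → V 1 := fun x γ =>
  if γ 0 = 0 then qbin (a + b) a * x (fun _ => 0)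
  else q ^ (-(b : ℤ)) * qbin (a + b - 1) b * x (fun j => if j = 0 then 1 else 0)
    + qbin (a + b - 1) a * x (fun j => if j = 0 then 0 else 1)

/-- The inclusion `Φ^{a,b} : V(a+b) → V(a) ⊗ V(b)`:
`v^{a+b}_1 ↦ v^a_1 ⊗ v^b_0 + q^a·v^a_0 ⊗ v^b_1`, `v^{a+b}_0 ↦ v^a_0 ⊗ v^b_0`. -/
noncomputable def PhiUp (a b : ℕ) : V 1 → V 2 := fun x γ =>
  if γ = (fun _ => 0) then x (fun _ => 0)
  else if γ = (fun j => if j = 0 then 1 else 0) then x (fun _ => 1)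
  else if γ = (fun j => if j = 0 then 0 else 1) then q ^ a * x (fun _ => 1)
  else 0

/-!
STATEMENT 13: For all positive integers `a, b`, the maps `Φ_{a,b} : V(a) ⊗ V(b) → V(a+b)`
and `Φ^{a,b} : V(a+b) → V(a) ⊗ V(b)` are homomorphisms of `U_q(gl(1|1))`-modules (i.e.
they commute with the actions of `E`, `F` and all `q^h`), commute with the bar
involutions, and satisfy `Φ_{a,b} ∘ Φ^{a,b} = [a+b choose a]·id_{V(a+b)}`.
-/

/-!
All spaces involved have dimension at most four, so each claim is a check on the basis
vectors `v_η`, `η ∈ {0,1}²` (or `{0,1}`). Once `E`, `F`, `q^h` and the bar involution are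
written out on them (the bar involution fixes every `v_η` except `v_{10}`, to which it adds
`(q - q⁻¹)[a] v_{01}`), the claims reduce to the identities `[a+b] = q^{-b}[a] + q^a[b]`,
`[a+b][a+b-1 choose b] = [a][a+b choose a]` (and its mirror image), the q-Pascal rule
`q^{-b}[a+b-1 choose b] + q^a[a+b-1 choose a] = [a+b choose a]`, and
`(q - q⁻¹)[k] = q^k - q^{-k}`, together with the bar invariance of quantum binomials.
-/

lemma q_ne_zero : q ≠ 0 := RatFunc.X_ne_zero

lemma q_pow_ne_q_inv_pow {k : ℕ} (hk : 0 < k) : q ^ k ≠ q⁻¹ ^ k := by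
  intro h
  have hX : (Polynomial.X : Polynomial ℂ) ^ (2 * k) = 1 := by
    apply RatFunc.algebraMap_injective ℂ
    rw [map_pow, map_one, RatFunc.algebraMap_X, two_mul, pow_add]
    change q ^ k * q ^ k = 1
    nth_rewrite 2 [h]
    rw [← mul_pow, mul_inv_cancel₀ q_ne_zero, one_pow]
  have := congrArg Polynomial.natDegree hX
  simp only [Polynomial.natDegree_X_pow, Polynomial.natDegree_one] at this
  omega

lemma q_sub_q_inv_ne_zero : q - q⁻¹ ≠ 0 :=
  sub_ne_zero.mpr (by simpa using q_pow_ne_q_inv_pow one_pos)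

lemma qnum_ne_zero {k : ℕ} (hk : 0 < k) : qnum k ≠ 0 :=
  div_ne_zero (sub_ne_zero.mpr (q_pow_ne_q_inv_pow hk)) q_sub_q_inv_ne_zero

lemma qfact_ne_zero : ∀ k, qfact k ≠ 0
  | 0 => one_ne_zero
  | k + 1 => mul_ne_zero (qnum_ne_zero k.succ_pos) (qfact_ne_zero k)

lemma q_sub_q_inv_mul_qnum (k : ℕ) : (q - q⁻¹) * qnum k = q ^ k - q⁻¹ ^ k :=
  mul_div_cancel₀ _ q_sub_q_inv_ne_zero

lemma qnum_add (a b : ℕ) : (q ^ b)⁻¹ * qnum a + q ^ a * qnum b = qnum (a + b) := by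
  rw [qnum, qnum, qnum]
  field_simp
  ring

lemma qnum_add_mul_qbin_sub_one_right {a : ℕ} (b : ℕ) (ha : 0 < a) :
    qnum (a + b) * qbin (a + b - 1) b = qnum a * qbin (a + b) a := by
  obtain ⟨a, rfl⟩ : ∃ a', a = a' + 1 := ⟨a - 1, by omega⟩
  rw [qbin, qbin, show a + 1 + b - 1 = a + b by omega, Nat.add_sub_cancel,
    Nat.add_sub_cancel_left, show a + 1 + b = a + b + 1 by ring]
  have := qfact_ne_zero a
  have := qfact_ne_zero b
  have := qnum_ne_zero a.succ_pos
  simp only [qfact]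
  field_simp

lemma qnum_add_mul_qbin_sub_one_left (a : ℕ) {b : ℕ} (hb : 0 < b) :
    qnum (a + b) * qbin (a + b - 1) a = qnum b * qbin (a + b) a := by
  obtain ⟨b, rfl⟩ : ∃ b', b = b' + 1 := ⟨b - 1, by omega⟩
  rw [qbin, qbin, show a + (b + 1) - 1 = a + b by omega, Nat.add_sub_cancel_left,
    Nat.add_sub_cancel_left, show a + (b + 1) = a + b + 1 by ring]
  have := qfact_ne_zero a
  have := qfact_ne_zero b
  have := qnum_ne_zero b.succ_pos
  simp only [qfact]
  field_simp

lemma qnum_mul_qbin_sub_one_comm {a b : ℕ} (ha : 0 < a) (hb : 0 < b) :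
    qnum b * qbin (a + b - 1) b = qnum a * qbin (a + b - 1) a := by
  apply mul_left_cancel₀ (qnum_ne_zero (Nat.add_pos_left ha b))
  linear_combination qnum b * qnum_add_mul_qbin_sub_one_right b ha
    - qnum a * qnum_add_mul_qbin_sub_one_left a hb

lemma qbin_pascal {a b : ℕ} (ha : 0 < a) (hb : 0 < b) :
    (q ^ b)⁻¹ * qbin (a + b - 1) b + q ^ a * qbin (a + b - 1) a = qbin (a + b) a := by
  apply mul_left_cancel₀ (qnum_ne_zero (Nat.add_pos_left ha b))
  linear_combination (q ^ b)⁻¹ * qnum_add_mul_qbin_sub_one_right b ha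
    + q ^ a * qnum_add_mul_qbin_sub_one_left a hb + qbin (a + b) a * qnum_add a b

lemma bar_q_inv (barK : K →+* K) (hbarKq : barK q = q⁻¹) : barK q⁻¹ = q := by
  rw [map_inv₀, hbarKq, inv_inv]

lemma bar_qnum (barK : K →+* K) (hbarKq : barK q = q⁻¹) (k : ℕ) : barK (qnum k) = qnum k := by
  rw [qnum, map_div₀, map_sub, map_pow, map_pow, map_sub, hbarKq, bar_q_inv barK hbarKq,
    ← neg_sub q, ← neg_sub (q ^ k)]
  exact neg_div_neg_eq _ _

lemma bar_qfact (barK : K →+* K) (hbarKq : barK q = q⁻¹) (k : ℕ) : barK (qfact k) = qfact k := by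
  induction k with
  | zero => exact map_one barK
  | succ k ih => rw [qfact, map_mul, bar_qnum barK hbarKq, ih]

lemma bar_qbin (barK : K →+* K) (hbarKq : barK q = q⁻¹) (m j : ℕ) :
    barK (qbin m j) = qbin m j := by
  simp only [qbin, map_div₀, map_mul, bar_qfact barK hbarKq]

lemma update_vec_two_zero {α : Type*} (u v w : α) : Function.update ![u, v] 0 w = ![w, v] := by
  ext i; fin_cases i <;> rfl

lemma update_vec_two_one {α : Type*} (u v w : α) : Function.update ![u, v] 1 w = ![u, w] := by
  ext i; fin_cases i <;> rfl

lemma update_vec_one {α : Type*} (u w : α) : Function.update ![u] 0 w = ![w] := by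
  ext i; fin_cases i; rfl

lemma onesBefore_zero {n : ℕ} (γ : Fin (n + 1) → Fin 2) : onesBefore γ 0 = 0 := by
  simp [onesBefore]

lemma onesBefore_vec_two_one (i j : Fin 2) : onesBefore ![i, j] 1 = if i = 1 then 1 else 0 := by
  revert i j; decide

section
variable (A : ℕ → ℕ)

lemma Eop_one_apply (x : V 1) (i : Fin 2) :
    Eop A 1 x ![i] = if i = 0 then qnum (A 0) * x ![1] else 0 := by
  have h0 : (Finset.univ.filter fun k : Fin 1 => 0 < k) = ∅ := by decide
  simp only [Eop, LinearMap.coe_mk, AddHom.coe_mk, Fin.sum_univ_one, h0, onesBefore_zero,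
    update_vec_one, Matrix.cons_val_fin_one]
  simp

lemma Eop_two_apply (x : V 2) (i j : Fin 2) :
    Eop A 2 x ![i, j] =
      (if i = 0 then qnum (A 0) * (q ^ A 1)⁻¹ * x ![1, j] else 0) +
      (if j = 0 then (if i = 1 then -1 else 1) * qnum (A 1) * x ![i, 1] else 0) := by
  have h0 : (Finset.univ.filter fun k : Fin 2 => 0 < k) = {1} := by decide
  have h1 : (Finset.univ.filter fun k : Fin 2 => 1 < k) = ∅ := by decide
  simp only [Eop, LinearMap.coe_mk, AddHom.coe_mk, Fin.sum_univ_two, h0, h1, onesBefore_zero,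
    onesBefore_vec_two_one, update_vec_two_zero, update_vec_two_one, Matrix.cons_val_zero,
    Matrix.cons_val_one, Matrix.cons_val_fin_one]
  split_ifs <;> simp

lemma Fop_one_apply (x : V 1) (i : Fin 2) :
    Fop A 1 x ![i] = if i = 1 then x ![0] else 0 := by
  simp [Fop, onesBefore_zero, update_vec_one]

lemma Fop_two_apply (x : V 2) (i j : Fin 2) :
    Fop A 2 x ![i, j] =
      (if i = 1 then x ![0, j] else 0) +
      (if j = 1 then (if i = 1 then -1 else 1) * q ^ A 0 * x ![i, 0] else 0) := by
  have h0 : (Finset.univ.filter fun k : Fin 2 => k < 0) = ∅ := by decide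
  have h1 : (Finset.univ.filter fun k : Fin 2 => k < 1) = {0} := by decide
  simp only [Fop, LinearMap.coe_mk, AddHom.coe_mk, Fin.sum_univ_two, h0, h1, onesBefore_zero,
    onesBefore_vec_two_one, update_vec_two_zero, update_vec_two_one, Matrix.cons_val_zero,
    Matrix.cons_val_one, Matrix.cons_val_fin_one]
  split_ifs <;> simp

lemma Kop_one_apply (c d : ℤ) (x : V 1) (i : Fin 2) :
    Kop A 1 c d x ![i] =
      q ^ (if i = 0 then c * (A 0 : ℤ) else c * ((A 0 : ℤ) - 1) + d) * x ![i] := by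
  simp [Kop]

lemma Kop_two_apply (c d : ℤ) (x : V 2) (i j : Fin 2) :
    Kop A 2 c d x ![i, j] =
      q ^ ((if i = 0 then c * (A 0 : ℤ) else c * ((A 0 : ℤ) - 1) + d) +
        (if j = 0 then c * (A 1 : ℤ) else c * ((A 1 : ℤ) - 1) + d)) * x ![i, j] := by
  simp only [Kop, LinearMap.coe_mk, AddHom.coe_mk, Fin.sum_univ_two, Matrix.cons_val_zero,
    Matrix.cons_val_one, Matrix.cons_val_fin_one]
  rfl

end

lemma Eop_length_zero (A : ℕ → ℕ) : Eop A 0 = 0 := by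
  ext x γ
  simp [Eop]

lemma barV_succ_apply (A : ℕ → ℕ) (m : ℕ) (f : V (m + 1)) (γ : Fin (m + 1) → Fin 2) :
    barV A (m + 1) f γ =
      barV A m (fun δ => f (Fin.snoc δ (γ (Fin.last m)))) (Fin.init γ) +
        if γ (Fin.last m) = 0 then 0
        else (q⁻¹ - q) * Eop A m (twist (barV A m fun δ => f (Fin.snoc δ 0))) (Fin.init γ) := by
  dsimp only [barV]
  by_cases h : γ (Fin.last m) = 0
  · rw [if_pos h, if_pos h, h, add_zero]; rfl
  · rw [if_neg h, if_neg h, show γ (Fin.last m) = 1 by omega]; rfl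

lemma barV_one (A : ℕ → ℕ) (f : V 1) : barV A 1 f = f := by
  ext γ
  rw [barV_succ_apply, Eop_length_zero]
  simp only [barV, Fin.snoc_init_self, LinearMap.zero_apply, Pi.zero_apply, mul_zero, ite_self,
    add_zero]

lemma barV_two_apply (A : ℕ → ℕ) (f : V 2) (i j : Fin 2) :
    barV A 2 f ![i, j] =
      f ![i, j] - if i = 0 ∧ j = 1 then (q⁻¹ - q) * qnum (A 0) * f ![1, 0] else 0 := by
  have hinit : Fin.init ![i, j] = ![i] := by ext k; fin_cases k; rfl
  have hsnoc : ∀ k l : Fin 2, (Fin.snoc ![k] l : Fin 2 → Fin 2) = ![k, l] := by decide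
  have hones : ones ![(1 : Fin 2)] = 1 := by decide
  rw [barV_succ_apply, barV_one, barV_one, hinit, Eop_one_apply]
  simp only [twist, hsnoc, hones]
  fin_cases i <;> fin_cases j <;> simp
  ring

lemma PhiDown_apply (a b : ℕ) (x : V 2) (i : Fin 2) :
    PhiDown a b x ![i] =
      if i = 0 then qbin (a + b) a * x ![0, 0]
      else q ^ (-(b : ℤ)) * qbin (a + b - 1) b * x ![1, 0] + qbin (a + b - 1) a * x ![0, 1] := by
  have h00 : (fun _ => 0 : Fin 2 → Fin 2) = ![0, 0] := by decide
  have h10 : (fun j => if j = 0 then 1 else 0 : Fin 2 → Fin 2) = ![1, 0] := by decide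
  have h01 : (fun j => if j = 0 then 0 else 1 : Fin 2 → Fin 2) = ![0, 1] := by decide
  simp only [PhiDown, Matrix.cons_val_fin_one, h00, h10, h01]

lemma PhiUp_apply (a b : ℕ) (x : V 1) (i j : Fin 2) :
    PhiUp a b x ![i, j] = if j = 0 then x ![i] else if i = 0 then q ^ a * x ![1] else 0 := by
  have h0 : (fun _ => 0 : Fin 1 → Fin 2) = ![0] := by decide
  have h1 : (fun _ => 1 : Fin 1 → Fin 2) = ![1] := by decide
  have h00 : (fun _ => 0 : Fin 2 → Fin 2) = ![0, 0] := by decide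
  have h10 : (fun j => if j = 0 then 1 else 0 : Fin 2 → Fin 2) = ![1, 0] := by decide
  have h01 : (fun j => if j = 0 then 0 else 1 : Fin 2 → Fin 2) = ![0, 1] := by decide
  simp only [PhiUp, h0, h1, h00, h10, h01]
  fin_cases i <;> fin_cases j <;> simp

lemma V_one_ext {x y : V 1} (h : ∀ i, x ![i] = y ![i]) : x = y := by
  funext γ
  rw [show γ = ![γ 0] by ext k; fin_cases k; rfl]
  exact h _

lemma V_two_ext {x y : V 2} (h : ∀ i j, x ![i, j] = y ![i, j]) : x = y := by
  funext γ
  rw [show γ = ![γ 0, γ 1] by ext k; fin_cases k <;> rfl]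
  exact h _ _

section
variable {a b : ℕ}

lemma PhiDown_Eop (ha : 0 < a) (hb : 0 < b) (x : V 2) :
    PhiDown a b (Eop (pair a b) 2 x) = Eop (single (a + b)) 1 (PhiDown a b x) := by
  refine V_one_ext fun i => ?_
  fin_cases i <;> simp [PhiDown_apply, Eop_two_apply, Eop_one_apply, pair, single]
  · linear_combination (-((q ^ b)⁻¹ * x ![1, 0])) * qnum_add_mul_qbin_sub_one_right b ha
      - x ![0, 1] * qnum_add_mul_qbin_sub_one_left a hb
  · linear_combination (-((q ^ b)⁻¹ * x ![1, 1])) * qnum_mul_qbin_sub_one_comm ha hb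

lemma PhiDown_Fop (ha : 0 < a) (hb : 0 < b) (x : V 2) :
    PhiDown a b (Fop (pair a b) 2 x) = Fop (single (a + b)) 1 (PhiDown a b x) := by
  refine V_one_ext fun i => ?_
  fin_cases i <;> simp [PhiDown_apply, Fop_two_apply, Fop_one_apply, pair]
  linear_combination x ![0, 0] * qbin_pascal ha hb

lemma PhiDown_Kop (c d : ℤ) (x : V 2) :
    PhiDown a b (Kop (pair a b) 2 c d x) = Kop (single (a + b)) 1 c d (PhiDown a b x) := by
  refine V_one_ext fun i => ?_
  fin_cases i <;> simp [PhiDown_apply, Kop_two_apply, Kop_one_apply, pair, single]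
  all_goals ring_nf

lemma PhiUp_Eop (x : V 1) :
    PhiUp a b (Eop (single (a + b)) 1 x) = Eop (pair a b) 2 (PhiUp a b x) := by
  refine V_two_ext fun i j => ?_
  fin_cases i <;> fin_cases j <;> simp [PhiUp_apply, Eop_two_apply, Eop_one_apply, pair, single]
  linear_combination (-(x ![1])) * qnum_add a b

lemma PhiUp_Fop (x : V 1) :
    PhiUp a b (Fop (single (a + b)) 1 x) = Fop (pair a b) 2 (PhiUp a b x) := by
  refine V_two_ext fun i j => ?_
  fin_cases i <;> fin_cases j <;> simp [PhiUp_apply, Fop_two_apply, Fop_one_apply, pair]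

lemma PhiUp_Kop (c d : ℤ) (x : V 1) :
    PhiUp a b (Kop (single (a + b)) 1 c d x) = Kop (pair a b) 2 c d (PhiUp a b x) := by
  refine V_two_ext fun i j => ?_
  fin_cases i <;> fin_cases j <;> simp [PhiUp_apply, Kop_two_apply, Kop_one_apply, pair, single,
    -mul_eq_mul_right_iff]
  all_goals ring_nf

lemma PhiDown_barSemi (ha : 0 < a) (hb : 0 < b) (barK : K →+* K) (hbarKq : barK q = q⁻¹)
    (x : V 2) :
    PhiDown a b (barSemi barK (pair a b) 2 x) = barSemi barK (single (a + b)) 1 (PhiDown a b x) := by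
  refine V_one_ext fun i => ?_
  fin_cases i <;> simp [barSemi, PhiDown_apply, barV_two_apply, barV_one, pair,
    bar_qbin barK hbarKq, hbarKq]
  linear_combination ((q⁻¹ - q) * barK (x ![1, 0])) * qnum_mul_qbin_sub_one_comm ha hb
    + (barK (x ![1, 0]) * qbin (a + b - 1) b) * q_sub_q_inv_mul_qnum b

lemma PhiUp_barSemi (barK : K →+* K) (hbarKq : barK q = q⁻¹) (x : V 1) :
    PhiUp a b (barSemi barK (single (a + b)) 1 x) = barSemi barK (pair a b) 2 (PhiUp a b x) := by
  refine V_two_ext fun i j => ?_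
  fin_cases i <;> fin_cases j <;> simp [barSemi, PhiUp_apply, barV_two_apply, barV_one, pair,
    hbarKq]
  linear_combination (-(barK (x ![1]))) * q_sub_q_inv_mul_qnum a

lemma PhiDown_PhiUp (ha : 0 < a) (hb : 0 < b) (x : V 1) :
    PhiDown a b (PhiUp a b x) = qbin (a + b) a • x := by
  refine V_one_ext fun i => ?_
  fin_cases i <;> simp [PhiDown_apply, PhiUp_apply]
  linear_combination x ![1] * qbin_pascal ha hb

end

theorem statement13_general (a b : ℕ) (ha : 0 < a) (hb : 0 < b)
    (barK : K →+* K) (hbarKq : barK q = q⁻¹)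
 :
    -- Φ_{a,b} and Φ^{a,b} are U_q(gl(1|1))-module homomorphisms
    (∀ x : V 2, PhiDown a b (Eop (pair a b) 2 x) = Eop (single (a + b)) 1 (PhiDown a b x)) ∧
    (∀ x : V 2, PhiDown a b (Fop (pair a b) 2 x) = Fop (single (a + b)) 1 (PhiDown a b x)) ∧
    (∀ (c d : ℤ) (x : V 2),
      PhiDown a b (Kop (pair a b) 2 c d x) = Kop (single (a + b)) 1 c d (PhiDown a b x)) ∧
    (∀ x : V 1, PhiUp a b (Eop (single (a + b)) 1 x) = Eop (pair a b) 2 (PhiUp a b x)) ∧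
    (∀ x : V 1, PhiUp a b (Fop (single (a + b)) 1 x) = Fop (pair a b) 2 (PhiUp a b x)) ∧
    (∀ (c d : ℤ) (x : V 1),
      PhiUp a b (Kop (single (a + b)) 1 c d x) = Kop (pair a b) 2 c d (PhiUp a b x)) ∧
    -- Φ_{a,b} and Φ^{a,b} commute with the bar involutions
    (∀ x : V 2,
      PhiDown a b (barSemi barK (pair a b) 2 x) = barSemi barK (single (a + b)) 1 (PhiDown a b x)) ∧
    (∀ x : V 1,
      PhiUp a b (barSemi barK (single (a + b)) 1 x) = barSemi barK (pair a b) 2 (PhiUp a b x)) ∧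
    -- Φ_{a,b} ∘ Φ^{a,b} = [a+b choose a]·id
    (∀ x : V 1, PhiDown a b (PhiUp a b x) = qbin (a + b) a • x) :=
  ⟨PhiDown_Eop ha hb, PhiDown_Fop ha hb, PhiDown_Kop, PhiUp_Eop, PhiUp_Fop, PhiUp_Kop,
    PhiDown_barSemi ha hb barK hbarKq, PhiUp_barSemi barK hbarKq, PhiDown_PhiUp ha hb⟩

theorem statement13 (a b : ℕ) (ha : 0 < a) (hb : 0 < b)
    (barK : K →+* K) (hbarKq : barK q = q⁻¹)
    (hbarKc : ∀ z : ℂ, barK (algebraMap ℂ K z) = algebraMap ℂ K z)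
 :
    -- Φ_{a,b} and Φ^{a,b} are U_q(gl(1|1))-module homomorphisms
    (∀ x : V 2, PhiDown a b (Eop (pair a b) 2 x) = Eop (single (a + b)) 1 (PhiDown a b x)) ∧
    (∀ x : V 2, PhiDown a b (Fop (pair a b) 2 x) = Fop (single (a + b)) 1 (PhiDown a b x)) ∧
    (∀ (c d : ℤ) (x : V 2),
      PhiDown a b (Kop (pair a b) 2 c d x) = Kop (single (a + b)) 1 c d (PhiDown a b x)) ∧
    (∀ x : V 1, PhiUp a b (Eop (single (a + b)) 1 x) = Eop (pair a b) 2 (PhiUp a b x)) ∧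
    (∀ x : V 1, PhiUp a b (Fop (single (a + b)) 1 x) = Fop (pair a b) 2 (PhiUp a b x)) ∧
    (∀ (c d : ℤ) (x : V 1),
      PhiUp a b (Kop (single (a + b)) 1 c d x) = Kop (pair a b) 2 c d (PhiUp a b x)) ∧
    -- Φ_{a,b} and Φ^{a,b} commute with the bar involutions
    (∀ x : V 2,
      PhiDown a b (barSemi barK (pair a b) 2 x) = barSemi barK (single (a + b)) 1 (PhiDown a b x)) ∧
    (∀ x : V 1,
      PhiUp a b (barSemi barK (single (a + b)) 1 x) = barSemi barK (pair a b) 2 (PhiUp a b x)) ∧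
    -- Φ_{a,b} ∘ Φ^{a,b} = [a+b choose a]·id
    (∀ x : V 1, PhiDown a b (PhiUp a b x) = qbin (a + b) a • x) :=
  statement13_general a b ha hb barK hbarKq
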